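/- With the Radau reconstruction I defined by (I v)|_{I_n} = v|_{I_n} + ((−1)^{q_n}/2)(L_{q_n}^n − L_{q_n+1}^n)⟦v⟧_{n−1}, for every scalar polynomial φ of degree at most q_n on I_n: ∫_{I_n} ∂_t(I v) φ dt = ∫_{I_n} ∂_t v φ dt − ⟦v⟧_{n−1} φ(t_{n−1}^+), as an identity in the Hilbert space V. -/

import Mathlib

/-!
Write `R = L_q − L_{q+1}` for the Legendre polynomials mapped to `(a, b)`. Integrating by parts,
`∫ φ R' = φ(b) R(b) − φ(a) R(a) − ∫ φ' R`. Since `deg φ' < q`, the last integral vanishes by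
orthogonality of `L_q` and `L_{q+1}` to lower degrees, which comes from Rodrigues' formula by
repeated integration by parts, `(x² − 1)^q` having roots of order `q` at `±1`. With `R(b) = 0` and
`R(a) = 2(−1)^q`, the correction term of `I v` therefore contributes exactly `−φ(a) j`.
-/

open MeasureTheory Polynomial

/-- The Legendre polynomial of degree `q` (Rodrigues' formula). -/
noncomputable def legendreP (q : ℕ) : Polynomial ℝ :=
  ((1 : ℝ) / (2 ^ q * q.factorial)) • (fun p : Polynomial ℝ => derivative p)^[q] ((X ^ 2 - 1) ^ q)

/-- The Legendre polynomial of degree `q` mapped affinely from `(-1,1)` to `(a,b)`,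
evaluated at `t`. -/
noncomputable def legMap (q : ℕ) (a b t : ℝ) : ℝ :=
  (legendreP q).eval (2 * (t - a) / (b - a) - 1)

namespace Polynomial

theorem degree_derivative_lt_of_natDegree_le {R : Type*} [Semiring R] {p : R[X]} {q : ℕ}
    (hp : p.natDegree ≤ q) : (derivative p).degree < q := by
  rcases eq_or_ne (derivative p) 0 with h | h
  · simp [h]
  · exact degree_le_natDegree.trans_lt <| WithBot.coe_lt_coe.mpr <|
      (natDegree_derivative_lt fun h0 => h (derivative_of_natDegree_zero h0)).trans_le hp

section CommRing

variable {R : Type*} [CommRing R]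

theorem eval_iterate_derivative_eq_zero_of_pow_dvd {p : R[X]} {r : R} {n k : ℕ}
    (h : (X - C r) ^ n ∣ p) (hk : k < n) : (derivative^[k] p).eval r = 0 :=
  dvd_iff_isRoot.mp <| (dvd_pow_self _ (Nat.sub_ne_zero_of_lt hk)).trans
    (pow_sub_dvd_iterate_derivative_of_pow_dvd k h)

theorem eval_iterate_derivative_X_sub_C_pow_mul (p : R[X]) (r : R) (n : ℕ) :
    (derivative^[n] ((X - C r) ^ n * p)).eval r = n.factorial * p.eval r := by
  rw [iterate_derivative_mul, eval_finsetSum,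
    Finset.sum_eq_single_of_mem 0 (Finset.mem_range.mpr n.succ_pos)]
  · simp [iterate_derivative_X_sub_pow_self]
  · intro k hk hk0
    rw [iterate_derivative_X_sub_pow, Nat.sub_sub_self (Finset.mem_range_succ_iff.mp hk)]
    simp [zero_pow hk0]

theorem X_sq_sub_one_pow (n : ℕ) :
    ((X : R[X]) ^ 2 - 1) ^ n = (X - C 1) ^ n * (X - C (-1)) ^ n := by
  rw [← mul_pow]
  congr 1
  simp only [map_one, map_neg]
  ring

end CommRing

theorem integral_eval_mul_eval_derivative (p r : ℝ[X]) (x y : ℝ) :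
    ∫ t in x..y, p.eval t * r.derivative.eval t =
      p.eval y * r.eval y - p.eval x * r.eval x - ∫ t in x..y, p.derivative.eval t * r.eval t :=
  intervalIntegral.integral_mul_deriv_eq_deriv_mul (fun t _ => p.hasDerivAt t)
    (fun t _ => r.hasDerivAt t) (p.derivative.continuous.intervalIntegrable _ _)
    (r.derivative.continuous.intervalIntegrable _ _)

theorem integral_eval_mul_iterate_derivative_eq_zero {x y : ℝ} {m : ℕ} {ψ H : ℝ[X]}
    (hψ : derivative^[m] ψ = 0) (hx : ∀ k < m, (derivative^[k] H).eval x = 0)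
    (hy : ∀ k < m, (derivative^[k] H).eval y = 0) :
    ∫ t in x..y, ψ.eval t * (derivative^[m] H).eval t = 0 := by
  induction m generalizing ψ with
  | zero => simp_all
  | succ m ih =>
    rw [Function.iterate_succ_apply', integral_eval_mul_eval_derivative,
      hx m m.lt_succ_self, hy m m.lt_succ_self,
      ih (by rwa [← Function.iterate_succ_apply]) (fun k hk => hx k (hk.trans m.lt_succ_self))
        (fun k hk => hy k (hk.trans m.lt_succ_self))]
    simp

end Polynomial

theorem legendreP_eval_one (q : ℕ) : (legendreP q).eval 1 = 1 := by
  rw [legendreP, eval_smul, X_sq_sub_one_pow, eval_iterate_derivative_X_sub_C_pow_mul]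
  norm_num
  field_simp

theorem legendreP_eval_neg_one (q : ℕ) : (legendreP q).eval (-1) = (-1) ^ q := by
  rw [legendreP, eval_smul, X_sq_sub_one_pow, mul_comm ((X - C 1) ^ q),
    eval_iterate_derivative_X_sub_C_pow_mul]
  norm_num
  rw [show (-2 : ℝ) = -1 * 2 by norm_num, mul_pow]
  field_simp

theorem integral_eval_mul_legendreP_eq_zero {m : ℕ} {ψ : ℝ[X]} (hψ : ψ.degree < m) :
    ∫ x in (-1 : ℝ)..1, ψ.eval x * (legendreP m).eval x = 0 := by
  have hroot : ∀ r : ℝ, r = 1 ∨ r = -1 → (X - C r) ^ m ∣ ((X : ℝ[X]) ^ 2 - 1) ^ m := by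
    rintro r (rfl | rfl) <;> rw [X_sq_sub_one_pow]
    exacts [dvd_mul_right _ _, dvd_mul_left _ _]
  have h := integral_eval_mul_iterate_derivative_eq_zero (x := -1) (y := 1)
    (iterate_derivative_eq_zero_of_degree_lt hψ)
    (fun k hk => eval_iterate_derivative_eq_zero_of_pow_dvd (hroot _ (.inr rfl)) hk)
    (fun k hk => eval_iterate_derivative_eq_zero_of_pow_dvd (hroot _ (.inl rfl)) hk)
  simp only [legendreP, eval_smul, smul_eq_mul, mul_left_comm _ (1 / _ : ℝ)]
  rw [intervalIntegral.integral_const_mul, h, mul_zero]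

theorem contDiff_legMap (m : ℕ) (a b : ℝ) {n : WithTop ℕ∞} : ContDiff ℝ n (legMap m a b) :=
  ((legendreP m).contDiff_aeval n).comp (by fun_prop)

theorem legMap_left (m : ℕ) (a b : ℝ) : legMap m a b a = (-1) ^ m := by
  simp [legMap, legendreP_eval_neg_one]

theorem legMap_right (m : ℕ) {a b : ℝ} (hab : a ≠ b) : legMap m a b b = 1 := by
  rw [legMap, mul_div_assoc, div_self (sub_ne_zero.mpr hab.symm)]
  norm_num [legendreP_eval_one]

theorem integral_eval_mul_legMap_eq_zero {m : ℕ} {a b : ℝ} (hab : a ≠ b) {χ : ℝ[X]}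
    (hχ : χ.degree < m) : ∫ t in a..b, χ.eval t * legMap m a b t = 0 := by
  set c := 2 / (b - a) with hc_def
  have hba : b - a ≠ 0 := sub_ne_zero.mpr hab.symm
  have hc : c ≠ 0 := div_ne_zero two_ne_zero hba
  set ψ := χ.comp (C c⁻¹ * X + C (a + c⁻¹))
  have hψ : ψ.degree < m := by
    rwa [degree_comp (by rw [degree_linear (inv_ne_zero hc)]; exact zero_lt_one),
      degree_linear (inv_ne_zero hc), mul_one]
  have hsubst : ∀ t, χ.eval t * legMap m a b t =
      (fun x => ψ.eval x * (legendreP m).eval x) (c * t - (c * a + 1)) := by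
    intro t
    simp only [ψ, eval_comp, eval_add, eval_mul, eval_C, eval_X, legMap]
    congr 2
    · field_simp; ring
    · rw [hc_def]; ring
  rw [intervalIntegral.integral_congr fun t _ => hsubst t,
    intervalIntegral.integral_comp_mul_sub (fun x => ψ.eval x * (legendreP m).eval x) hc,
    show c * a - (c * a + 1) = -1 by ring,
    show c * b - (c * a + 1) = 1 by rw [hc_def]; field_simp; ring,
    integral_eval_mul_legendreP_eq_zero hψ, smul_zero]

theorem integral_eval_mul_deriv_radau {q : ℕ} {a b : ℝ} (hab : a ≠ b) {φ : ℝ[X]}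
    (hφ : φ.natDegree ≤ q) :
    ∫ t in a..b, φ.eval t *
        ((-1) ^ q / 2 * deriv (fun s => legMap q a b s - legMap (q + 1) a b s) t) =
      -φ.eval a := by
  set R := fun s => legMap q a b s - legMap (q + 1) a b s
  have hR : ContDiff ℝ 1 R := (contDiff_legMap q a b).sub (contDiff_legMap (q + 1) a b)
  have hφ' : (derivative φ).degree < q := degree_derivative_lt_of_natDegree_le hφ
  have hint (m : ℕ) : IntervalIntegrable (fun t => (derivative φ).eval t * legMap m a b t)
      volume a b :=
    ((derivative φ).continuous.mul (contDiff_legMap m a b (n := 0)).continuous).intervalIntegrable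
      _ _
  have hortho : ∫ t in a..b, (derivative φ).eval t * R t = 0 := by
    simp only [R, mul_sub]
    rw [intervalIntegral.integral_sub (hint q) (hint (q + 1)),
      integral_eval_mul_legMap_eq_zero hab hφ',
      integral_eval_mul_legMap_eq_zero hab (hφ'.trans (by exact_mod_cast q.lt_succ_self)),
      sub_zero]
  simp_rw [mul_left_comm (φ.eval _)]
  rw [intervalIntegral.integral_const_mul,
    intervalIntegral.integral_mul_deriv_eq_deriv_mul (fun t _ => φ.hasDerivAt t)
      (fun t _ => (hR.differentiable one_ne_zero t).hasDerivAt)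
      (φ.derivative.continuous.intervalIntegrable _ _)
      ((hR.continuous_deriv le_rfl).intervalIntegrable _ _), hortho]
  have hsq : ((-1 : ℝ) ^ q) ^ 2 = 1 := by rw [← pow_mul, mul_comm, pow_mul]; norm_num
  simp only [R, legMap_left, legMap_right _ hab]
  linear_combination (-φ.eval a) * hsq

/-- Here `j` stands for the jump `⟦v⟧_{n-1}`, so that the bracket in the integrand is
`∂_t (I v)` for the Radau reconstruction `I v = v + ((−1)^q/2)(L_q − L_{q+1}) • j`. -/
theorem stmt_7 {V : Type*} [NormedAddCommGroup V] [NormedSpace ℝ V] [CompleteSpace V]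
    (q : ℕ) (a b : ℝ) (hab : a < b)
    (v v' : ℝ → V)
    (hpoly : ∃ c : Fin (q + 1) → V, ∀ t : ℝ, v t = ∑ i : Fin (q + 1), t ^ (i : ℕ) • c i)
    (hderiv : ∀ t : ℝ, HasDerivAt v (v' t) t)
    (j : V) (φ : Polynomial ℝ) (hφ : φ.natDegree ≤ q) :
    (∫ t in a..b, φ.eval t •
        (v' t + (((-1 : ℝ) ^ q / 2) *
          deriv (fun s => legMap q a b s - legMap (q + 1) a b s) t) • j))
      = (∫ t in a..b, φ.eval t • v' t) - φ.eval a • j := by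
  obtain ⟨c, hc⟩ := hpoly
  have hv' : Continuous v' := by
    have hv : ContDiff ℝ 1 v := by rw [funext hc]; fun_prop
    rw [show v' = deriv v from funext fun t => (hderiv t).deriv.symm]
    exact hv.continuous_deriv le_rfl
  set D := deriv fun s => legMap q a b s - legMap (q + 1) a b s
  have hD : Continuous D :=
    ((contDiff_legMap q a b).sub (contDiff_legMap (q + 1) a b)).continuous_deriv le_rfl
  have hsplit (t : ℝ) : φ.eval t • (v' t + ((-1 : ℝ) ^ q / 2 * D t) • j) =
      φ.eval t • v' t + (φ.eval t * ((-1) ^ q / 2 * D t)) • j := by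
    rw [smul_add, smul_smul]
  have hφv : IntervalIntegrable (fun t => φ.eval t • v' t) volume a b :=
    (φ.continuous.smul hv').intervalIntegrable _ _
  have hφD : IntervalIntegrable (fun t => (φ.eval t * ((-1) ^ q / 2 * D t)) • j) volume a b :=
    ((φ.continuous.mul (continuous_const.mul hD)).smul continuous_const).intervalIntegrable _ _
  simp_rw [hsplit]
  rw [intervalIntegral.integral_add hφv hφD,
    intervalIntegral.integral_smul_const, integral_eval_mul_deriv_radau hab.ne hφ, neg_smul,
    sub_eq_add_neg]
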